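/- arXiv:1109.3847 — 3 statements merged into one kernel-verified Lean document; each statement's English description precedes it below -/
import Mathlib

section
/- If in a Steiner triple system of order v there exists a nonincident set of s points and s blocks, then s ≤ (2v + 5 - √(24v + 25))/2. -/
/-!
The blocks of `D` avoid `Y`, so they are triples inside the `v - s` points of `X \ Y`. Since two
blocks of a Steiner triple system share at most one point, the `3s` pairs covered by the blocks of
`D` are distinct pairs of `X \ Y`, whence `3s ≤ (v - s).choose 2`. Solving this quadratic
inequality for `s` gives the bound.
-/

def IsSTS {α : Type*} [DecidableEq α] (v : ℕ) (X : Finset α) (B : Finset (Finset α)) : Prop :=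
  X.card = v ∧ (∀ b ∈ B, b ⊆ X ∧ b.card = 3) ∧
    ∀ p ∈ X, ∀ q ∈ X, p ≠ q → ∃! b, b ∈ B ∧ p ∈ b ∧ q ∈ b

open Finset

namespace IsSTS

variable {α : Type*} [DecidableEq α] {v : ℕ} {X : Finset α} {B : Finset (Finset α)}

theorem pairwiseDisjoint_powersetCard_two (h : IsSTS v X B) :
    (B : Set (Finset α)).PairwiseDisjoint (powersetCard 2) := by
  intro b hb c hc hne
  refine disjoint_left.mpr fun p hpb hpc => hne ?_
  rw [mem_powersetCard] at hpb hpc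
  obtain ⟨x, y, hxy, rfl⟩ := card_eq_two.mp hpb.2
  have hxb : x ∈ b := hpb.1 (mem_insert_self x {y})
  have hyb : y ∈ b := hpb.1 (mem_insert_of_mem (mem_singleton_self y))
  obtain ⟨w, -, hw⟩ := h.2.2 x ((h.2.1 b hb).1 hxb) y ((h.2.1 b hb).1 hyb) hxy
  exact (hw b ⟨hb, hxb, hyb⟩).trans
    (hw c ⟨hc, hpc.1 (mem_insert_self x {y}), hpc.1 (mem_insert_of_mem (mem_singleton_self y))⟩).symm

theorem three_mul_card_le_choose_two (h : IsSTS v X B) {D : Finset (Finset α)} (hD : D ⊆ B)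
    {Z : Finset α} (hDZ : ∀ b ∈ D, b ⊆ Z) : 3 * #D ≤ (#Z).choose 2 := by
  have hdisj : (D : Set (Finset α)).PairwiseDisjoint (powersetCard 2) :=
    h.pairwiseDisjoint_powersetCard_two.subset (coe_subset.mpr hD)
  have hpairs : D.biUnion (powersetCard 2) ⊆ Z.powersetCard 2 := by
    intro p hp
    obtain ⟨b, hb, hpb⟩ := mem_biUnion.mp hp
    rw [mem_powersetCard] at hpb ⊢
    exact ⟨hpb.1.trans (hDZ b hb), hpb.2⟩
  have hthree : ∀ b ∈ D, #(powersetCard 2 b) = 3 := fun b hb => by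
    rw [card_powersetCard, (h.2.1 b (hD hb)).2]; rfl
  calc 3 * #D = ∑ b ∈ D, #(powersetCard 2 b) := by
        rw [sum_congr rfl hthree, sum_const, smul_eq_mul, mul_comm]
    _ = #(D.biUnion (powersetCard 2)) := (card_biUnion hdisj).symm
    _ ≤ #(Z.powersetCard 2) := card_le_card hpairs
    _ = (#Z).choose 2 := card_powersetCard 2 Z

end IsSTS

theorem le_of_three_mul_le_choose_two_sub {s v : ℕ} (hsv : s ≤ v)
    (h : 3 * s ≤ (v - s).choose 2) :
    (s : ℝ) ≤ (2 * v + 5 - Real.sqrt (24 * v + 25)) / 2 := by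
  have hu : ((v - s : ℕ) : ℝ) = v - s := Nat.cast_sub hsv
  have hreal : 3 * (s : ℝ) ≤ (v - s) * (v - s - 1) / 2 := by
    rw [← hu, ← Nat.cast_choose_two]; exact_mod_cast h
  -- `24 v + 25 ≤ (2 (v - s) + 5)²` is `6 s ≤ (v - s) (v - s - 1)` rearranged
  have hsqrt : Real.sqrt (24 * v + 25) ≤ 2 * (v - s) + 5 := by
    have hnonneg : (0 : ℝ) ≤ v - s := by rw [← hu]; positivity
    exact Real.sqrt_le_iff.mpr ⟨by linarith, by nlinarith⟩
  linarith

theorem stmt5 {α : Type*} [DecidableEq α] (v s : ℕ) (X : Finset α) (B : Finset (Finset α))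
    (hSTS : IsSTS v X B) (Y : Finset α) (hY : Y ⊆ X) (hs : Y.card = s)
    (D : Finset (Finset α)) (hD : D ⊆ B) (ht : D.card = s)
    (hNonInc : ∀ y ∈ Y, ∀ b ∈ D, y ∉ b) :
    (s : ℝ) ≤ (2 * v + 5 - Real.sqrt (24 * v + 25)) / 2 := by
  have hsv : s ≤ v := hs ▸ hSTS.1 ▸ card_le_card hY
  have hDXY : ∀ b ∈ D, b ⊆ X \ Y := fun b hb x hx =>
    mem_sdiff.mpr ⟨(hSTS.2.1 b (hD hb)).1 hx, fun hxY => hNonInc x hxY b hb hx⟩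
  have hcount := hSTS.three_mul_card_le_choose_two hD hDXY
  rw [card_sdiff_of_subset hY, hs, hSTS.1, ht] at hcount
  exact le_of_three_mul_le_choose_two_sub hsv hcount
end

section
/- Let (X, B) be a Steiner triple system of order v and Y ⊆ X with |Y| = s. If the number of blocks disjoint from Y equals (v(v-1) + s² - s(2v-1))/6, then every block of B meets Y in 0, 2, or 3 points; equivalently, no block contains two points of X \ Y, so (X \ Y, B'_Y) is a Steiner triple system of order v - s, where B'_Y is the set of blocks disjoint from Y. -/
/-!
Put `Z = X \ Y` and `n = |Z|`. Every pair of points of `Z` lies in exactly one block, so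
`∑_b C(|b ∩ Z|, 2) = C(n, 2)`. A block disjoint from `Y` contributes `3` to this sum, a block
meeting `Y` in one point contributes `1` and every other block `0`; hence
`3 · #{b | b ∩ Y = ∅} ≤ C(n, 2)`, with equality exactly when no block meets `Y` in one point.
The hypothesis says `6 · #{b | b ∩ Y = ∅} = n (n - 1)`, which is this equality case. Then any
block through two points of `Z` misses `Y`, so the blocks disjoint from `Y` form an STS on `Z`.
-/

open Finset

section

variable {α : Type*} [DecidableEq α]

theorem card_filter_subset_pair_eq_one {B : Finset (Finset α)} {p q : α}
    (h : ∃! b, b ∈ B ∧ p ∈ b ∧ q ∈ b) : #(B.filter (fun b => {p, q} ⊆ b)) = 1 := by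
  simpa [card_eq_one_iff_existsUnique, insert_subset_iff, and_assoc] using h

theorem sum_choose_two_card_inter_eq {B : Finset (Finset α)} {Z : Finset α}
    (h : ∀ p ∈ Z, ∀ q ∈ Z, p ≠ q → ∃! b, b ∈ B ∧ p ∈ b ∧ q ∈ b) :
    ∑ b ∈ B, (#(b ∩ Z)).choose 2 = (#Z).choose 2 := by
  have pairs_in_block (b : Finset α) :
      (#(b ∩ Z)).choose 2 = #((Z.powersetCard 2).filter (· ⊆ b)) := by
    rw [← card_powersetCard]
    congr 1
    ext e
    simp only [mem_powersetCard, mem_filter, subset_inter_iff]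
    tauto
  have blocks_on_pair : ∀ e ∈ Z.powersetCard 2, #(B.filter (e ⊆ ·)) = 1 := by
    intro e he
    obtain ⟨heZ, he2⟩ := mem_powersetCard.mp he
    obtain ⟨p, q, hpq, rfl⟩ := card_eq_two.mp he2
    exact card_filter_subset_pair_eq_one
      (h p (heZ (mem_insert_self _ _)) q (heZ (mem_insert_of_mem (mem_singleton_self _))) hpq)
  simp only [pairs_in_block, card_filter]
  rw [sum_comm]
  simp only [← card_filter]
  rw [sum_congr rfl blocks_on_pair, sum_const, smul_eq_mul, mul_one, card_powersetCard]

theorem card_inter_sdiff_add_card_inter {b X : Finset α} (Y : Finset α) (hb : b ⊆ X) :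
    #(b ∩ (X \ Y)) + #(b ∩ Y) = #b := by
  rw [← inter_sdiff_assoc, inter_eq_left.mpr hb, card_sdiff_add_card_inter]

theorem choose_two_three_sub_ge_three_mul_ite (k : ℕ) :
    3 * (if k = 0 then 1 else 0) ≤ (3 - k).choose 2 := by
  rcases k with _ | k <;> simp

theorem choose_two_three_sub_eq_three_mul_ite_iff {k : ℕ} (hk : k ≤ 3) :
    (3 - k).choose 2 = 3 * (if k = 0 then 1 else 0) ↔ k ≠ 1 := by
  interval_cases k <;> decide

namespace IsSTS

variable {v : ℕ} {X Y : Finset α} {B : Finset (Finset α)}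

theorem card_inter_sdiff_add_card_inter (h : IsSTS v X B) {b : Finset α} (hb : b ∈ B) :
    #(b ∩ (X \ Y)) + #(b ∩ Y) = 3 := by
  rw [_root_.card_inter_sdiff_add_card_inter Y (h.2.1 b hb).1, (h.2.1 b hb).2]

theorem sum_choose_two_card_inter_sdiff (h : IsSTS v X B) :
    ∑ b ∈ B, (#(b ∩ (X \ Y))).choose 2 = (#(X \ Y)).choose 2 :=
  sum_choose_two_card_inter_eq fun p hp q hq hpq =>
    h.2.2 p (mem_sdiff.mp hp).1 q (mem_sdiff.mp hq).1 hpq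

theorem card_inter_ne_one (h : IsSTS v X B)
    (hN : 3 * #(B.filter (fun b => b ∩ Y = ∅)) = (#(X \ Y)).choose 2) :
    ∀ b ∈ B, #(b ∩ Y) ≠ 1 := by
  have hcover : ∀ b ∈ B, (#(b ∩ (X \ Y))).choose 2 = (3 - #(b ∩ Y)).choose 2 := fun b hb => by
    rw [← h.card_inter_sdiff_add_card_inter hb, Nat.add_sub_cancel]
  have hsum : ∑ b ∈ B, 3 * (if #(b ∩ Y) = 0 then 1 else 0) =
      ∑ b ∈ B, (3 - #(b ∩ Y)).choose 2 := by
    rw [← sum_congr rfl hcover, h.sum_choose_two_card_inter_sdiff, ← hN, ← mul_sum, sum_boole]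
    simp only [card_eq_zero, Nat.cast_id]
  intro b hb
  have hbY : #(b ∩ Y) ≤ 3 := by have := h.card_inter_sdiff_add_card_inter (Y := Y) hb; omega
  exact (choose_two_three_sub_eq_three_mul_ite_iff hbY).mp
    ((sum_eq_sum_iff_of_le fun b _ => choose_two_three_sub_ge_three_mul_ite _).mp hsum b hb).symm

theorem restrict (h : IsSTS v X B) {Z : Finset α} (hZ : Z ⊆ X)
    (hclosed : ∀ b ∈ B, 2 ≤ #(b ∩ Z) → b ⊆ Z) : IsSTS #Z Z (B.filter (· ⊆ Z)) := by
  refine ⟨rfl, fun b hb => ⟨(mem_filter.mp hb).2, (h.2.1 b (mem_filter.mp hb).1).2⟩, ?_⟩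
  intro p hp q hq hpq
  obtain ⟨b, ⟨hb, hpb, hqb⟩, huniq⟩ := h.2.2 p (hZ hp) q (hZ hq) hpq
  have hbZ : 2 ≤ #(b ∩ Z) := by
    rw [← card_pair hpq]
    exact card_le_card (by simp [insert_subset_iff, *])
  exact ⟨b, ⟨mem_filter.mpr ⟨hb, hclosed b hb hbZ⟩, hpb, hqb⟩,
    fun c ⟨hc, hpc, hqc⟩ => huniq c ⟨(mem_filter.mp hc).1, hpc, hqc⟩⟩

theorem filter_inter_eq_empty_eq_filter_subset_sdiff (h : IsSTS v X B) :
    B.filter (fun b => b ∩ Y = ∅) = B.filter (· ⊆ X \ Y) :=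
  filter_congr fun b hb => by
    rw [subset_sdiff, ← disjoint_iff_inter_eq_empty, and_iff_right (h.2.1 b hb).1]

end IsSTS

end

theorem stmt7 {α : Type*} [DecidableEq α] (v s : ℕ) (X : Finset α) (B : Finset (Finset α))
    (hSTS : IsSTS v X B) (Y : Finset α) (hY : Y ⊆ X) (hs : Y.card = s)
    (heq : ((B.filter (fun b => b ∩ Y = ∅)).card : ℤ) * 6 =
      v * (v - 1) + s ^ 2 - s * (2 * v - 1)) :
    (∀ b ∈ B, (b ∩ Y).card = 0 ∨ (b ∩ Y).card = 2 ∨ (b ∩ Y).card = 3) ∧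
      (∀ b ∈ B, ¬ 2 ≤ (b ∩ (X \ Y)).card ∨ b ∩ Y = ∅) ∧
      IsSTS (v - s) (X \ Y) (B.filter (fun b => b ∩ Y = ∅)) := by
  have hsv : s ≤ v := hs ▸ hSTS.1 ▸ card_le_card hY
  have hZ : #(X \ Y) = v - s := by rw [card_sdiff_of_subset hY, hSTS.1, hs]
  have hN : 3 * #(B.filter (fun b => b ∩ Y = ∅)) = (#(X \ Y)).choose 2 := by
    have hQ := congrArg (Int.cast : ℤ → ℚ) heq
    push_cast at hQ
    rw [hZ, ← Nat.cast_inj (R := ℚ), Nat.cast_choose_two]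
    push_cast [Nat.cast_sub hsv]
    linarith
  have hne := hSTS.card_inter_ne_one hN
  have hsplit b (hb : b ∈ B) := hSTS.card_inter_sdiff_add_card_inter (Y := Y) hb
  have hclosed : ∀ b ∈ B, 2 ≤ #(b ∩ (X \ Y)) → b ∩ Y = ∅ := fun b hb h2 =>
    card_eq_zero.mp (by have := hne b hb; have := hsplit b hb; omega)
  refine ⟨fun b hb => ?_,
    fun b hb => or_iff_not_imp_left.mpr fun h => hclosed b hb (not_not.mp h), ?_⟩
  · have := hne b hb; have := hsplit b hb; omega
  · rw [hSTS.filter_inter_eq_empty_eq_filter_subset_sdiff, ← hZ]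
    exact hSTS.restrict sdiff_subset fun b hb h2 =>
      subset_sdiff.mpr ⟨(hSTS.2.1 b hb).1, disjoint_iff_inter_eq_empty.mpr (hclosed b hb h2)⟩
end

section
/- Define f(v) as the maximum s such that some Steiner triple system of order v contains a nonincident set of s points and s blocks. Assuming the Doyen-Wilson theorem, f(v) = (2v + 5 - √(24v+25))/2 holds if and only if v ∈ {216z² + 42z + 1, 216z² + 186z + 39, 216z² + 138z + 21, 216z² + 282z + 91} for some nonnegative integer z. -/
def HasNonincident (v s : ℕ) : Prop :=
  ∃ (X : Finset ℕ) (B : Finset (Finset ℕ)), IsSTS v X B ∧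
    ∃ Y ⊆ X, ∃ D ⊆ B, Y.card = s ∧ D.card = s ∧ ∀ y ∈ Y, ∀ b ∈ D, y ∉ b

noncomputable def f (v : ℕ) : ℕ := sSup {s : ℕ | HasNonincident v s}

/-! If `Y, D` is a nonincident pair with `|Y| = |D| = s`, the blocks of `D` lie among the
`m = v - s` points off `Y` and cover `6 s` of their ordered pairs, so `6 s ≤ m (m - 1)`, that is
`m² + 5 m ≥ 6 v`. The formula is `v - m₀` for the root `m₀` of `m² + 5 m = 6 v`, so it is attained
exactly when equality holds, i.e. when `D` is an STS(m) on the complement of `Y`. Then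
`m ≡ 1, 3 (mod 6)`, and together with `v ≡ 1, 3 (mod 6)` this fixes `m` modulo `36`, which gives the
four families. Conversely, for those `v` the Doyen–Wilson theorem provides an STS(v) with a
sub-STS(m), and its blocks together with the points outside it attain the bound. -/

open Finset

namespace IsSTS

variable {α : Type*} [DecidableEq α] {v : ℕ} {X : Finset α} {B : Finset (Finset α)}

theorem eq_of_mem_of_mem (h : IsSTS v X B) {b b' : Finset α} (hb : b ∈ B) (hb' : b' ∈ B)
    {p q : α} (hpq : p ≠ q) (hp : p ∈ b) (hq : q ∈ b) (hp' : p ∈ b') (hq' : q ∈ b') : b = b' :=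
  (h.2.2 p ((h.2.1 b hb).1 hp) q ((h.2.1 b hb).1 hq) hpq).unique ⟨hb, hp, hq⟩ ⟨hb', hp', hq'⟩

theorem card_biUnion_offDiag (h : IsSTS v X B) {D : Finset (Finset α)} (hD : D ⊆ B) :
    (D.biUnion offDiag).card = 6 * D.card := by
  rw [card_biUnion, sum_const_nat fun b hb => by rw [offDiag_card, (h.2.1 b (hD hb)).2], mul_comm]
  intro b hb b' hb' hne
  refine disjoint_left.2 fun pq hpq hpq' => hne ?_
  rw [mem_offDiag] at hpq hpq'
  exact h.eq_of_mem_of_mem (hD hb) (hD hb') hpq.2.2 hpq.1 hpq.2.1 hpq'.1 hpq'.2.1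

theorem biUnion_offDiag (h : IsSTS v X B) : B.biUnion offDiag = X.offDiag := by
  ext ⟨p, q⟩
  simp only [mem_biUnion, mem_offDiag]
  constructor
  · rintro ⟨b, hb, hp, hq, hpq⟩
    exact ⟨(h.2.1 b hb).1 hp, (h.2.1 b hb).1 hq, hpq⟩
  · rintro ⟨hp, hq, hpq⟩
    obtain ⟨b, ⟨hb, hpb, hqb⟩, -⟩ := h.2.2 p hp q hq hpq
    exact ⟨b, hb, hpb, hqb, hpq⟩

theorem six_mul_card (h : IsSTS v X B) : 6 * B.card = v * v - v := by
  rw [← h.card_biUnion_offDiag subset_rfl, h.biUnion_offDiag, offDiag_card, h.1]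

theorem card_erase_eq_two_mul (h : IsSTS v X B) {p : α} (hp : p ∈ X) :
    (X.erase p).card = 2 * (B.filter (p ∈ ·)).card := by
  have hX : X.erase p = (B.filter (p ∈ ·)).biUnion (·.erase p) := by
    ext q
    simp only [mem_erase, mem_biUnion, mem_filter]
    constructor
    · rintro ⟨hqp, hq⟩
      obtain ⟨b, ⟨hb, hpb, hqb⟩, -⟩ := h.2.2 p hp q hq (Ne.symm hqp)
      exact ⟨b, ⟨hb, hpb⟩, hqp, hqb⟩
    · rintro ⟨b, ⟨hb, -⟩, hqp, hqb⟩
      exact ⟨hqp, (h.2.1 b hb).1 hqb⟩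
  rw [hX, card_biUnion, sum_const_nat fun b hb => ?_, mul_comm]
  · rw [mem_filter] at hb
    rw [card_erase_of_mem hb.2, (h.2.1 b hb.1).2]
  · intro b hb b' hb' hne
    rw [mem_coe, mem_filter] at hb hb'
    refine disjoint_left.2 fun q hq hq' => hne ?_
    rw [mem_erase] at hq hq'
    exact h.eq_of_mem_of_mem hb.1 hb'.1 (Ne.symm hq.1) hb.2 hq.2 hb'.2 hq'.2

theorem mod_six (h : IsSTS v X B) (hv : 0 < v) : v % 6 = 1 ∨ v % 6 = 3 := by
  obtain ⟨p, hp⟩ := card_pos.1 (h.1 ▸ hv : 0 < X.card)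
  have hdeg := h.card_erase_eq_two_mul hp
  rw [card_erase_of_mem hp, h.1] at hdeg
  have hpairs : v * (v - 1) = 6 * B.card := by rw [h.six_mul_card, Nat.mul_sub_one]
  have h3 : 3 ∣ v * (v - 1) := hpairs ▸ Dvd.dvd.mul_right (by norm_num) _
  rcases Nat.prime_three.dvd_mul.1 h3 with h3 | h3 <;> omega

variable {Y : Finset α} {D : Finset (Finset α)}

theorem subset_sdiff (h : IsSTS v X B) (hD : D ⊆ B) (hYD : ∀ y ∈ Y, ∀ b ∈ D, y ∉ b) {b : Finset α}
    (hb : b ∈ D) : b ⊆ X \ Y :=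
  fun x hx => mem_sdiff.2 ⟨(h.2.1 b (hD hb)).1 hx, fun hy => hYD x hy b hb hx⟩

theorem biUnion_offDiag_subset (h : IsSTS v X B) (hD : D ⊆ B) (hYD : ∀ y ∈ Y, ∀ b ∈ D, y ∉ b) :
    D.biUnion offDiag ⊆ (X \ Y).offDiag :=
  biUnion_subset.2 fun _ hb => offDiag_mono (h.subset_sdiff hD hYD hb)

theorem six_mul_card_le (h : IsSTS v X B) (hY : Y ⊆ X) (hD : D ⊆ B)
    (hYD : ∀ y ∈ Y, ∀ b ∈ D, y ∉ b) :
    6 * D.card ≤ (v - Y.card) * (v - Y.card) - (v - Y.card) := by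
  have hle := card_le_card (h.biUnion_offDiag_subset hD hYD)
  rwa [h.card_biUnion_offDiag hD, offDiag_card, card_sdiff_of_subset hY, h.1] at hle

theorem sdiff_of_six_mul_card_eq (h : IsSTS v X B) (hY : Y ⊆ X) (hD : D ⊆ B)
    (hYD : ∀ y ∈ Y, ∀ b ∈ D, y ∉ b)
    (heq : 6 * D.card = (v - Y.card) * (v - Y.card) - (v - Y.card)) :
    IsSTS (v - Y.card) (X \ Y) D := by
  have hpairs : D.biUnion offDiag = (X \ Y).offDiag :=
    eq_of_subset_of_card_le (h.biUnion_offDiag_subset hD hYD) (by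
      rw [h.card_biUnion_offDiag hD, offDiag_card, card_sdiff_of_subset hY, h.1, heq])
  refine ⟨by rw [card_sdiff_of_subset hY, h.1],
    fun b hb => ⟨h.subset_sdiff hD hYD hb, (h.2.1 b (hD hb)).2⟩, fun p hp q hq hpq => ?_⟩
  have hmem : (p, q) ∈ D.biUnion offDiag := hpairs ▸ mem_offDiag.2 ⟨hp, hq, hpq⟩
  obtain ⟨b, hb, hpqb⟩ := mem_biUnion.1 hmem
  rw [mem_offDiag] at hpqb
  exact ⟨b, ⟨hb, hpqb.1, hpqb.2.1⟩, fun b' ⟨hb', hp', hq'⟩ =>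
    h.eq_of_mem_of_mem (hD hb') (hD hb) hpq hp' hq' hpqb.1 hpqb.2.1⟩

end IsSTS

theorem isSTS_singleton {α : Type*} [DecidableEq α] (a : α) : IsSTS 1 {a} ∅ :=
  ⟨card_singleton a, by simp, fun _ hp _ hq hpq =>
    absurd ((mem_singleton.1 hp).trans (mem_singleton.1 hq).symm) hpq⟩

theorem hasNonincident_sdiff {v m : ℕ} {X Z : Finset ℕ} {B D : Finset (Finset ℕ)}
    (hXB : IsSTS v X B) (hZD : IsSTS m Z D) (hZX : Z ⊆ X) (hDB : D ⊆ B)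
    (h : m * m + 5 * m = 6 * v) : HasNonincident v (v - m) := by
  refine ⟨X, B, hXB, X \ Z, sdiff_subset, D, hDB, ?_, ?_,
    fun y hy b hb hyb => (mem_sdiff.1 hy).2 ((hZD.2.1 b hb).1 hyb)⟩
  · rw [card_sdiff_of_subset hZX, hXB.1, hZD.1]
  · have hD := hZD.six_mul_card
    generalize m * m = M at hD h
    omega

namespace HasNonincident

variable {v s : ℕ}

theorem le (h : HasNonincident v s) : s ≤ v := by
  obtain ⟨X, B, hXB, Y, hY, -, -, rfl, -⟩ := h
  exact hXB.1 ▸ card_le_card hY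

theorem six_mul_le (h : HasNonincident v s) : 6 * s ≤ (v - s) * (v - s) - (v - s) := by
  obtain ⟨X, B, hXB, Y, hY, D, hD, rfl, hDs, hYD⟩ := h
  exact hDs ▸ hXB.six_mul_card_le hY hD hYD

theorem mod_six_of_eq (h : HasNonincident v s) (hv : 0 < v)
    (heq : (v - s) * (v - s) + 5 * (v - s) = 6 * v) : (v - s) % 6 = 1 ∨ (v - s) % 6 = 3 := by
  have hsv := h.le
  obtain ⟨X, B, hXB, Y, hY, D, hD, rfl, hDs, hYD⟩ := h
  have hsts := hXB.sdiff_of_six_mul_card_eq hY hD hYD (by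
    generalize (v - Y.card) * (v - Y.card) = N at heq ⊢
    omega)
  exact hsts.mod_six (Nat.pos_of_ne_zero fun h0 => by rw [h0] at heq; omega)

end HasNonincident

theorem bddAbove_hasNonincident (v : ℕ) : BddAbove {s | HasNonincident v s} :=
  ⟨v, fun _ h => h.le⟩

theorem hasNonincident_zero {v : ℕ} {X : Finset ℕ} {B : Finset (Finset ℕ)} (h : IsSTS v X B) :
    HasNonincident v 0 :=
  ⟨X, B, h, ∅, empty_subset _, ∅, empty_subset _, rfl, rfl, by simp⟩

theorem hasNonincident_f {v : ℕ} {X : Finset ℕ} {B : Finset (Finset ℕ)} (h : IsSTS v X B) :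
    HasNonincident v (f v) :=
  Nat.sSup_mem ⟨0, hasNonincident_zero h⟩ (bddAbove_hasNonincident v)

theorem f_eq_sub {v m : ℕ} (h : HasNonincident v (v - m)) (hm : m * m + 5 * m = 6 * v) :
    f v = v - m := by
  refine le_antisymm (csSup_le ⟨_, h⟩ fun s hs => ?_) (le_csSup (bddAbove_hasNonincident v) h)
  have h6 := hs.six_mul_le
  have hsv := hs.le
  by_contra! hlt
  have hlt' : v - s < m := by omega
  have := Nat.mul_self_lt_mul_self hlt'
  omega

theorem cast_eq_iff_mul_self_add {v s : ℕ} (hs : s ≤ v) :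
    (s : ℝ) = (2 * v + 5 - Real.sqrt (24 * v + 25)) / 2 ↔
      (v - s) * (v - s) + 5 * (v - s) = 6 * v := by
  obtain ⟨m, rfl⟩ := Nat.exists_eq_add_of_le hs
  rw [Nat.add_sub_cancel_left, ← Nat.cast_inj (R := ℝ)]
  push_cast
  calc (s : ℝ) = (2 * (s + m) + 5 - Real.sqrt (24 * (s + m) + 25)) / 2
        ↔ Real.sqrt (24 * (s + m) + 25) = 2 * m + 5 := by constructor <;> intro h <;> linarith
    _ ↔ 24 * (s + m) + 25 = (2 * m + 5) * (2 * m + 5 : ℝ) :=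
        Real.sqrt_eq_iff_mul_self_eq (by positivity) (by positivity)
    _ ↔ _ := by constructor <;> intro h <;> linarith

theorem exists_mul_self_add_eq_iff {v : ℕ} (hv : v % 6 = 1 ∨ v % 6 = 3) :
    (∃ m, m * m + 5 * m = 6 * v ∧ (m % 6 = 1 ∨ m % 6 = 3)) ↔
      ∃ z : ℕ, v = 216 * z ^ 2 + 42 * z + 1 ∨ v = 216 * z ^ 2 + 186 * z + 39 ∨
        v = 216 * z ^ 2 + 138 * z + 21 ∨ v = 216 * z ^ 2 + 282 * z + 91 := by
  constructor
  · rintro ⟨m, hm, hm6⟩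
    have hr : m % 36 = 1 ∨ m % 36 = 13 ∨ m % 36 = 9 ∨ m % 36 = 21 := by
      have hmod : (m % 36 * (m % 36) + 5 * (m % 36)) % 36 = 6 * v % 36 := by
        rw [← hm, Nat.add_mod, Nat.mul_mod, Nat.mul_mod 5]
        simp
      have : m % 36 < 36 := Nat.mod_lt _ (by norm_num)
      interval_cases hr : m % 36 <;> omega
    refine ⟨m / 36, ?_⟩
    rw [← Nat.div_add_mod m 36] at hm
    rcases hr with hr | hr | hr | hr <;> rw [hr] at hm
    · exact Or.inl (by linarith)
    · exact Or.inr (Or.inl (by linarith))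
    · exact Or.inr (Or.inr (Or.inl (by linarith)))
    · exact Or.inr (Or.inr (Or.inr (by linarith)))
  · rintro ⟨z, rfl | rfl | rfl | rfl⟩
    exacts [⟨36 * z + 1, by ring, by omega⟩, ⟨36 * z + 13, by ring, by omega⟩,
      ⟨36 * z + 9, by ring, by omega⟩, ⟨36 * z + 21, by ring, by omega⟩]

theorem eq_one_or_two_mul_add_one_le {v m : ℕ} (hv : v % 6 = 1 ∨ v % 6 = 3)
    (hm : m % 6 = 1 ∨ m % 6 = 3) (h : m * m + 5 * m = 6 * v) : m = 1 ∨ 2 * m + 1 ≤ v := by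
  rcases lt_or_ge m 8 with hm8 | hm8
  · left
    interval_cases m <;> omega
  · right
    nlinarith

def DoyenWilson : Prop :=
  ∀ a b : ℕ, (a % 6 = 1 ∨ a % 6 = 3) → (b % 6 = 1 ∨ b % 6 = 3) → a ≥ 2 * b + 1 →
    ∃ (X Z : Finset ℕ) (Bl D : Finset (Finset ℕ)), IsSTS a X Bl ∧ IsSTS b Z D ∧ Z ⊆ X ∧ D ⊆ Bl

namespace DoyenWilson

variable {v : ℕ}

theorem exists_isSTS (hDW : DoyenWilson) (hv : v % 6 = 1 ∨ v % 6 = 3) :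
    ∃ (X : Finset ℕ) (B : Finset (Finset ℕ)), IsSTS v X B := by
  rcases eq_or_ne v 1 with rfl | hv1
  · exact ⟨_, _, isSTS_singleton 0⟩
  · obtain ⟨X, -, B, -, hXB, -⟩ := hDW v 1 hv (Or.inl rfl) (by omega)
    exact ⟨X, B, hXB⟩

theorem hasNonincident_sub (hDW : DoyenWilson) {m : ℕ} (hv : v % 6 = 1 ∨ v % 6 = 3)
    (hm : m % 6 = 1 ∨ m % 6 = 3) (h : m * m + 5 * m = 6 * v) : HasNonincident v (v - m) := by
  rcases eq_one_or_two_mul_add_one_le hv hm h with rfl | hle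
  · obtain rfl : v = 1 := by omega
    exact hasNonincident_sdiff (isSTS_singleton 0) (isSTS_singleton 0) subset_rfl subset_rfl rfl
  · obtain ⟨X, Z, B, D, hXB, hZD, hZX, hDB⟩ := hDW v m hv hm hle
    exact hasNonincident_sdiff hXB hZD hZX hDB h

end DoyenWilson

theorem stmt19 (v : ℕ) (hv : v % 6 = 1 ∨ v % 6 = 3)
    (hDW : ∀ a b : ℕ, (a % 6 = 1 ∨ a % 6 = 3) → (b % 6 = 1 ∨ b % 6 = 3) →
      a ≥ 2 * b + 1 →
      ∃ (X Z : Finset ℕ) (Bl D : Finset (Finset ℕ)),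
        IsSTS a X Bl ∧ IsSTS b Z D ∧ Z ⊆ X ∧ D ⊆ Bl) :
    ((f v : ℝ) = (2 * v + 5 - Real.sqrt (24 * v + 25)) / 2) ↔
      ∃ z : ℕ, v = 216 * z ^ 2 + 42 * z + 1 ∨ v = 216 * z ^ 2 + 186 * z + 39 ∨
        v = 216 * z ^ 2 + 138 * z + 21 ∨ v = 216 * z ^ 2 + 282 * z + 91 := by
  obtain ⟨X, B, hXB⟩ := DoyenWilson.exists_isSTS hDW hv
  have hf := hasNonincident_f hXB
  rw [cast_eq_iff_mul_self_add hf.le, ← exists_mul_self_add_eq_iff hv]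
  constructor
  · intro h
    exact ⟨v - f v, h, hf.mod_six_of_eq (by omega) h⟩
  · rintro ⟨m, hm, hm6⟩
    have hmv : m ≤ v := by nlinarith
    rw [f_eq_sub (DoyenWilson.hasNonincident_sub hDW hv hm6 hm) hm, Nat.sub_sub_self hmv]
    exact hm
end
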